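/- arXiv:1603.02971 — 5 statements merged into one kernel-verified Lean document; each statement's English description precedes it below -/
import Mathlib

section
/- Let S = (S, S̄) be a good bisection of a graph G with odd n vertices, and let u be one of its good vertices. Define the belief assignment b by b(x) = 1 for every x ∈ S∖{u} and b(x) = 0 for every x ∈ S̄∪{u}. Then: (1) in the truthful state, a majority of (n+1)/2 players have opinion 0; (2) u's best response in the truthful state is to play opinion 1; (3) after u's switch, no vertex with belief 1 has an incentive to adopt opinion 0. Hence b is a subvertable belief assignment and u is a swing vertex for b. -/
open Finset

/-- Number of neighbors of `x` in the set `A`. -/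
def nbrs {V : Type*} [DecidableEq V] (G : SimpleGraph V) [DecidableRel G.Adj]
    (x : V) (A : Finset V) : ℕ :=
  (A.filter (G.Adj x)).card

/-- Deficiency of `x` with respect to the bisection whose larger side is `S`. -/
def defc {V : Type*} [Fintype V] [DecidableEq V] (G : SimpleGraph V)
    [DecidableRel G.Adj] (S : Finset V) (x : V) : ℤ :=
  if x ∈ S then (nbrs G x S : ℤ) - (nbrs G x Sᶜ : ℤ)
  else (nbrs G x Sᶜ : ℤ) - (nbrs G x S : ℤ)

/-!
Away from `u` the belief `b` is the indicator of `S`, and after `u` switches the whole profile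
is; so each player considered sees its neighbours play that indicator. For such a player `x`
with stubbornness `α`, opinion `1` costs `(1 - α) · W(x, S̄)` plus `α` if its belief is `0`,
and opinion `0` costs `(1 - α) · W(x, S)` plus `α` if its belief is `1`. So the comparison is
between `W(x, S) - W(x, S̄)` and `α / (1 - α)`, whose integer threshold is `a_x`: the good
vertex `u` clears it strictly and switches to `1`, while `def_S(x) ≥ -a_x` keeps every other
vertex of `S` at `1`.
-/

lemma add_one_sub_mul_lt_of_floor_lt_sub {α : ℝ} (hα : α < 1) {p q : ℕ}
    (h : ⌊α / (1 - α)⌋ < (p : ℤ) - q) :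
    α + (1 - α) * q < (1 - α) * p := by
  have h' : α / (1 - α) < (p : ℝ) - q := by exact_mod_cast Int.floor_lt.mp h
  rw [div_lt_iff₀ (sub_pos.mpr hα)] at h'
  linarith

lemma one_sub_mul_le_add_of_sub_le_floor {α : ℝ} (hα : α < 1) {p q : ℕ}
    (h : (q : ℤ) - p ≤ ⌊α / (1 - α)⌋) :
    (1 - α) * q ≤ α + (1 - α) * p := by
  have h' : (q : ℝ) - p ≤ α / (1 - α) := by exact_mod_cast Int.le_floor.mp h
  rw [le_div_iff₀ (sub_pos.mpr hα)] at h'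
  linarith

section Graph

variable {V : Type*} [Fintype V] [DecidableEq V] (G : SimpleGraph V) [DecidableRel G.Adj]

lemma two_mul_card_insert_compl {S : Finset V} {u : V} (hu : u ∈ S)
    (hS : 2 * #S = Fintype.card V + 1) : 2 * #(insert u Sᶜ) = Fintype.card V + 1 := by
  rw [card_insert_of_notMem (notMem_compl.mpr hu), card_compl]
  have := card_le_univ S
  omega

lemma defc_of_mem {S : Finset V} {x : V} (hx : x ∈ S) :
    defc G S x = (nbrs G x S : ℤ) - nbrs G x Sᶜ :=
  if_pos hx

lemma sum_abs_sub_of_eq_ite (S : Finset V) (x : V) (r : ℝ) {t : V → ℝ}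
    (ht : ∀ j ∈ G.neighborFinset x, t j = if j ∈ S then 1 else 0) :
    ∑ j ∈ G.neighborFinset x, |r - t j| = nbrs G x S * |r - 1| + nbrs G x Sᶜ * |r| := by
  have hS : (G.neighborFinset x).filter (· ∈ S) = S.filter (G.Adj x) := by
    ext j; simp [and_comm]
  have hSc : (G.neighborFinset x).filter (· ∉ S) = Sᶜ.filter (G.Adj x) := by
    ext j; simp [and_comm]
  rw [sum_congr rfl fun j hj => by rw [ht j hj, apply_ite (fun s => |r - s|)], sum_ite,
    sum_const, sum_const, hS, hSc, nsmul_eq_mul, nsmul_eq_mul, nbrs, nbrs, sub_zero]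

variable {G} {S : Finset V} {x : V} {t₁ t₀ : V → ℝ}

lemma add_sum_abs_one_sub_lt_of_floor_lt_defc {α : ℝ} (hα : α < 1) (hx : x ∈ S)
    (h : ⌊α / (1 - α)⌋ < defc G S x)
    (ht₁ : ∀ j ∈ G.neighborFinset x, t₁ j = if j ∈ S then 1 else 0)
    (ht₀ : ∀ j ∈ G.neighborFinset x, t₀ j = if j ∈ S then 1 else 0) :
    α + (1 - α) * ∑ j ∈ G.neighborFinset x, |1 - t₁ j| <
      (1 - α) * ∑ j ∈ G.neighborFinset x, |0 - t₀ j| := by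
  rw [sum_abs_sub_of_eq_ite G S x _ ht₁, sum_abs_sub_of_eq_ite G S x _ ht₀]
  simp only [sub_self, abs_zero, mul_zero, abs_one, mul_one, zero_add, zero_sub, abs_neg,
    add_zero]
  exact add_one_sub_mul_lt_of_floor_lt_sub hα (defc_of_mem G hx ▸ h)

lemma sum_abs_one_sub_le_add_of_neg_defc_le_floor {α : ℝ} (hα : α < 1) (hx : x ∈ S)
    (h : -defc G S x ≤ ⌊α / (1 - α)⌋)
    (ht₁ : ∀ j ∈ G.neighborFinset x, t₁ j = if j ∈ S then 1 else 0)
    (ht₀ : ∀ j ∈ G.neighborFinset x, t₀ j = if j ∈ S then 1 else 0) :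
    (1 - α) * ∑ j ∈ G.neighborFinset x, |1 - t₁ j| ≤
      α + (1 - α) * ∑ j ∈ G.neighborFinset x, |0 - t₀ j| := by
  rw [sum_abs_sub_of_eq_ite G S x _ ht₁, sum_abs_sub_of_eq_ite G S x _ ht₀]
  simp only [sub_self, abs_zero, mul_zero, abs_one, mul_one, zero_add, zero_sub, abs_neg,
    add_zero]
  exact one_sub_mul_le_add_of_sub_le_floor hα (by rw [defc_of_mem G hx] at h; omega)

end Graph

theorem stmt3_general {V : Type*} [Fintype V] [DecidableEq V]
    (G : SimpleGraph V) [DecidableRel G.Adj]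
    (α : V → ℝ) (hα : ∀ v, 0 < α v ∧ α v < 1)
    (a : V → ℤ) (ha : ∀ v, a v = ⌊α v / (1 - α v)⌋)
    (S : Finset V) (hbis : 2 * S.card = Fintype.card V + 1)
    (hgood₁ : ∀ x ∈ S, -(a x) ≤ defc G S x)
    (u : V) (huS : u ∈ S) (hgood₂ : a u + 1 ≤ defc G S u)
    (b : V → ℝ) (hb : ∀ x, b x = if x ∈ S ∧ x ≠ u then 1 else 0)
    (cost : (V → ℝ) → V → ℝ)
    (hcost : ∀ t i, cost t i =
      α i * |t i - b i| + (1 - α i) * ∑ j ∈ G.neighborFinset i, |t i - t j|) :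
    2 * ((univ : Finset V).filter (fun x => b x = 0)).card = Fintype.card V + 1
    ∧ cost (Function.update b u 1) u < cost b u
    ∧ ∀ x, b x = 1 →
        cost (Function.update b u 1) x ≤
          cost (Function.update (Function.update b u 1) x 0) x := by
  have hbu : b u = 0 := by simp [hb]
  have hb_ne : ∀ j ≠ u, b j = if j ∈ S then 1 else 0 := fun j hj => by simp [hb, hj]
  have hswitch : ∀ j, Function.update b u 1 j = if j ∈ S then 1 else 0 := by
    intro j
    rcases eq_or_ne j u with rfl | hj
    · simp [huS]
    · rw [Function.update_of_ne hj, hb_ne j hj]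
  refine ⟨?majority, ?swing, ?stable⟩
  case majority =>
    have hzero : (univ : Finset V).filter (fun x => b x = 0) = insert u Sᶜ := by
      ext x
      by_cases hxu : x = u <;> simp [hb, hxu]
    rw [hzero, two_mul_card_insert_compl huS hbis]
  case swing =>
    have hnbr : ∀ j ∈ G.neighborFinset u, b j = if j ∈ S then 1 else 0 :=
      fun j hj => hb_ne j ((G.mem_neighborFinset u j).mp hj).ne'
    rw [hcost, hcost, Function.update_self, hbu]
    simp only [sub_zero, abs_one, mul_one, sub_self, abs_zero, mul_zero, zero_add]
    exact add_sum_abs_one_sub_lt_of_floor_lt_defc (hα u).2 huS (by rw [← ha]; omega)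
      (fun j _ => hswitch j) hnbr
  case stable =>
    intro x hx
    have hxS : x ∈ S := by
      by_contra h
      simp [hb, h] at hx
    have hnbr : ∀ j ∈ G.neighborFinset x,
        Function.update (Function.update b u 1) x 0 j = if j ∈ S then 1 else 0 :=
      fun j hj => by
        rw [Function.update_of_ne ((G.mem_neighborFinset x j).mp hj).ne', hswitch]
    rw [hcost, hcost, Function.update_self, hswitch, if_pos hxS, hx, sub_self, abs_zero, mul_zero, zero_add, show |(0 : ℝ) - 1| = 1 by norm_num, mul_one]
    exact sum_abs_one_sub_le_add_of_neg_defc_le_floor (hα x).2 hxS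
      (by linarith [hgood₁ x hxS, ha x]) (fun j _ => hswitch j) hnbr

/-- Given a good bisection `(S, S̄)` with good vertex `u`, the belief
assignment `b` with `b x = 1` for `x ∈ S \ {u}` and `b x = 0` otherwise satisfies:
(1) a majority of `(n+1)/2` players have belief (truthful opinion) 0;
(2) `u`'s best response in the truthful state is to play opinion 1;
(3) after `u`'s switch, no vertex with belief 1 has an incentive to adopt opinion 0.
Hence `b` is subvertable and `u` is a swing vertex for `b`. -/
theorem stmt3 {V : Type*} [Fintype V] [DecidableEq V]
    (G : SimpleGraph V) [DecidableRel G.Adj]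
    (hodd : Odd (Fintype.card V))
    (α : V → ℝ) (hα : ∀ v, 0 < α v ∧ α v < 1)
    (a : V → ℤ) (ha : ∀ v, a v = ⌊α v / (1 - α v)⌋)
    (S : Finset V) (hbis : 2 * S.card = Fintype.card V + 1)
    (hgood₁ : ∀ x ∈ S, -(a x) ≤ defc G S x)
    (u : V) (huS : u ∈ S) (hgood₂ : a u + 1 ≤ defc G S u)
    (b : V → ℝ) (hb : ∀ x, b x = if x ∈ S ∧ x ≠ u then 1 else 0)
    (cost : (V → ℝ) → V → ℝ)
    (hcost : ∀ t i, cost t i =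
      α i * |t i - b i| + (1 - α i) * ∑ j ∈ G.neighborFinset i, |t i - t j|) :
    2 * ((univ : Finset V).filter (fun x => b x = 0)).card = Fintype.card V + 1
    ∧ cost (Function.update b u 1) u < cost b u
    ∧ ∀ x, b x = 1 →
        cost (Function.update b u 1) x ≤
          cost (Function.update (Function.update b u 1) x 0) x :=
  stmt3_general G α hα a ha S hbis hgood₁ u huS hgood₂ b hb cost hcost
end

section
/- Let S = (S, S̄) be a bisection of minimal potential of a graph G. Then for every x ∈ S and y ∈ S̄, it holds that def_S(x) + def_S(y) + 2·W(x,y) ≥ a_x - a_y. -/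
open Finset

/-- Number of edges between the (disjoint) sets `A` and `B` (i.e. `W(A, B)`). -/
def ew {V : Type*} [DecidableEq V] (G : SimpleGraph V) [DecidableRel G.Adj]
    (A B : Finset V) : ℕ :=
  ∑ x ∈ A, nbrs G x B

/-- Potential of the bisection `(S, S̄)`:
`Φ(S,S̄) = W(S,S̄) + (1/2)(Σ_{x∈S} a_x − Σ_{y∈S̄} a_y)`. -/
def pot {V : Type*} [Fintype V] [DecidableEq V] (G : SimpleGraph V)
    [DecidableRel G.Adj] (a : V → ℕ) (S : Finset V) : ℚ :=
  (ew G S Sᶜ : ℚ) + (∑ x ∈ S, (a x : ℚ) - ∑ y ∈ Sᶜ, (a y : ℚ)) / 2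

/-- Rank of `u` with respect to the bisection `S`:
`rank_S(u) = ⌈(a_u + 1 − def_S(u)) / 2⌉`. -/
def rk {V : Type*} [Fintype V] [DecidableEq V] (G : SimpleGraph V)
    [DecidableRel G.Adj] (a : V → ℕ) (S : Finset V) (u : V) : ℤ :=
  ⌈((((a u : ℤ) + 1 - defc G S u : ℤ) : ℚ)) / 2⌉

/-- A vertex `u` is stubborn if `a_u ≥ min {d(u), n − d(u) − 1}`. -/
def Stubborn {V : Type*} [Fintype V] [DecidableEq V] (G : SimpleGraph V)
    [DecidableRel G.Adj] (a : V → ℕ) (u : V) : Prop :=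
  min (G.degree u : ℤ) ((Fintype.card V : ℤ) - (G.degree u : ℤ) - 1) ≤ (a u : ℤ)

/-- A `u`-pair `(A, B)` for the bisection `S`:
if `u ∈ S`, `A ⊆ S ∩ N̄(u)`, `B ⊆ S̄ ∩ N(u)` with `|A| = |B| = rank_S(u)`;
if `u ∈ S̄`, `A ⊆ S ∩ N(u)`, `B ⊆ S̄ ∩ N̄(u)` with `|A| = rank_S(u)` and
`|B| = rank_S(u) − 1` (the vertex `u` itself is not moved). -/
def IsUPair {V : Type*} [Fintype V] [DecidableEq V] (G : SimpleGraph V)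
    [DecidableRel G.Adj] (a : V → ℕ) (S : Finset V) (u : V)
    (A B : Finset V) : Prop :=
  if u ∈ S then
    A ⊆ S ∧ (∀ v ∈ A, ¬ G.Adj u v) ∧ u ∉ A ∧
    B ⊆ Sᶜ ∧ (∀ v ∈ B, G.Adj u v) ∧
    (A.card : ℤ) = rk G a S u ∧ (B.card : ℤ) = rk G a S u
  else
    A ⊆ S ∧ (∀ v ∈ A, G.Adj u v) ∧
    B ⊆ Sᶜ ∧ (∀ v ∈ B, ¬ G.Adj u v) ∧ u ∉ B ∧
    (A.card : ℤ) = rk G a S u ∧ (B.card : ℤ) = rk G a S u - 1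

/-- The larger side of the bisection associated with a `u`-pair `(A, B)`:
`S ∖ A ∪ B` if `u ∈ S`, and `S̄ ∖ B ∪ A` if `u ∈ S̄`. -/
def assoc {V : Type*} [Fintype V] [DecidableEq V] (S : Finset V) (u : V)
    (A B : Finset V) : Finset V :=
  if u ∈ S then (S \ A) ∪ B else (Sᶜ \ B) ∪ A

/-!
Swapping `x ∈ S` with `y ∉ S` changes the potential by exactly
`def_S(x) + def_S(y) + 2·W(x,y) − (a_x − a_y)`: the cut gains `W(x,S) + W(y,S̄)` and loses
`W(x,S̄) + W(y,S)`, and the edge `xy`, counted in both losses,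
stays in the cut; the weight term moves by `a_y − a_x`. Minimality says this change is nonnegative.
-/

section Swap

variable {V : Type*} [DecidableEq V] (G : SimpleGraph V) [DecidableRel G.Adj]

lemma nbrs_insert {v w : V} {A : Finset V} (hw : w ∉ A) :
    nbrs G v (insert w A) = nbrs G v A + if G.Adj v w then 1 else 0 := by
  unfold nbrs
  rw [filter_insert]
  split_ifs
  · exact card_insert_of_notMem (by simp [hw])
  · rfl

lemma nbrs_erase_self (v : V) (A : Finset V) : nbrs G v (A.erase v) = nbrs G v A := by
  rw [nbrs, filter_erase, erase_eq_of_notMem (by simp)]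
  rfl

lemma sum_adj_eq_nbrs (w : V) (A : Finset V) :
    ∑ v ∈ A, (if G.Adj v w then 1 else 0) = nbrs G w A := by
  simp only [sum_boole, Nat.cast_id, nbrs, G.adj_comm w]

lemma ew_insert_left {v : V} {A : Finset V} (hv : v ∉ A) (B : Finset V) :
    ew G (insert v A) B = ew G A B + nbrs G v B := by
  rw [ew, sum_insert hv, add_comm]
  rfl

lemma ew_insert_right (A : Finset V) {w : V} {B : Finset V} (hw : w ∉ B) :
    ew G A (insert w B) = ew G A B + nbrs G w A := by
  simp only [ew, nbrs_insert G hw, sum_add_distrib, sum_adj_eq_nbrs]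

lemma ew_insert_insert {x y : V} {A B : Finset V} (hx : x ∉ A) (hy : y ∉ B) :
    ew G (insert x A) (insert y B) =
      ew G A B + nbrs G y A + nbrs G x B + if G.Adj x y then 1 else 0 := by
  rw [ew_insert_left G hx, ew_insert_right G A hy, nbrs_insert G hy]
  ring

variable [Fintype V]

lemma compl_insert_erase {S : Finset V} {x y : V} (hxy : x ≠ y) :
    (insert y (S.erase x))ᶜ = insert x (Sᶜ.erase y) := by
  rw [compl_insert, compl_erase, erase_insert_of_ne hxy]

lemma ew_swap {S : Finset V} {x y : V} (hx : x ∈ S) (hy : y ∉ S) :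
    (ew G (insert y (S.erase x)) (insert y (S.erase x))ᶜ : ℤ) =
      ew G S Sᶜ + defc G S x + defc G S y + 2 * (if G.Adj x y then 1 else 0) := by
  have hxy : x ≠ y := by rintro rfl; exact hy hx
  have hyc : y ∈ Sᶜ := mem_compl.mpr hy
  have hxE : x ∉ S.erase x := notMem_erase x S
  have hyF : y ∉ Sᶜ.erase y := notMem_erase y Sᶜ
  have hyE : y ∉ S.erase x := fun h => hy (mem_of_mem_erase h)
  have hxF : x ∉ Sᶜ.erase y := fun h => mem_compl.mp (mem_of_mem_erase h) hx
  have hS : S = insert x (S.erase x) := (insert_erase hx).symm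
  have hSc : Sᶜ = insert y (Sᶜ.erase y) := (insert_erase hyc).symm
  have nxS : nbrs G x S = nbrs G x (S.erase x) := (nbrs_erase_self G x S).symm
  have nySc : nbrs G y Sᶜ = nbrs G y (Sᶜ.erase y) := (nbrs_erase_self G y Sᶜ).symm
  have nxSc : nbrs G x Sᶜ = nbrs G x (Sᶜ.erase y) + if G.Adj x y then 1 else 0 := by
    rw [hSc, nbrs_insert G hyF, erase_insert hyF]
  have nyS : nbrs G y S = nbrs G y (S.erase x) + if G.Adj x y then 1 else 0 := by
    rw [hS, nbrs_insert G hxE, erase_insert hxE]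
    simp only [G.adj_comm y x]
  have cut : ew G S Sᶜ = ew G (S.erase x) (Sᶜ.erase y) + nbrs G y (S.erase x) +
      nbrs G x (Sᶜ.erase y) + if G.Adj x y then 1 else 0 := by
    rw [← ew_insert_insert G hxE hyF, ← hS, ← hSc]
  rw [compl_insert_erase hxy, ew_insert_insert G hyE hxF, cut, defc, defc, if_pos hx,
    if_neg hy, nxS, nySc, nxSc, nyS]
  simp only [G.adj_comm y x]
  split_ifs <;> push_cast <;> ring

lemma sum_sub_sum_compl_swap {M : Type*} [AddCommGroup M] (f : V → M) {S : Finset V}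
    {x y : V} (hx : x ∈ S) (hy : y ∉ S) :
    ∑ v ∈ insert y (S.erase x), f v - ∑ v ∈ (insert y (S.erase x))ᶜ, f v =
      ∑ v ∈ S, f v - ∑ v ∈ Sᶜ, f v + 2 • (f y - f x) := by
  have hxy : x ≠ y := by rintro rfl; exact hy hx
  rw [compl_insert_erase hxy, sum_insert (fun h => hy (mem_of_mem_erase h)),
    sum_insert (fun h => mem_compl.mp (mem_of_mem_erase h) hx), sum_erase_eq_sub hx,
    sum_erase_eq_sub (mem_compl.mpr hy)]
  abel

lemma pot_swap {a : V → ℕ} {S : Finset V} {x y : V} (hx : x ∈ S) (hy : y ∉ S) :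
    pot G a (insert y (S.erase x)) = pot G a S +
      ((defc G S x + defc G S y + 2 * (if G.Adj x y then 1 else 0) - (a x - a y) : ℤ) : ℚ) := by
  have hcut := congrArg (fun n : ℤ => (n : ℚ)) (ew_swap G hx hy)
  have hweight := sum_sub_sum_compl_swap (fun v => (a v : ℚ)) hx hy
  simp only [Int.cast_add, Int.cast_natCast] at hcut
  rw [pot, pot, hcut, hweight]
  push_cast
  ring

end Swap

theorem stmt4_general {V : Type*} [Fintype V] [DecidableEq V]
    (G : SimpleGraph V) [DecidableRel G.Adj] (a : V → ℕ)
    (S : Finset V)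
    (hmin : ∀ x ∈ S, ∀ y ∉ S, pot G a S ≤ pot G a (insert y (S.erase x)))
    (x y : V) (hx : x ∈ S) (hy : y ∉ S) :
    defc G S x + defc G S y + 2 * (if G.Adj x y then 1 else 0) ≥ (a x : ℤ) - (a y : ℤ) := by
  have h := hmin x hx y hy
  rw [pot_swap G hx hy, le_add_iff_nonneg_right, Int.cast_nonneg_iff, sub_nonneg] at h
  exact h

/-- Lemma 2: If the bisection `S` has minimal potential, then for
every `x ∈ S` and `y ∈ S̄`, `def_S(x) + def_S(y) + 2·W(x,y) ≥ a_x − a_y`. -/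
theorem stmt4 {V : Type*} [Fintype V] [DecidableEq V]
    (G : SimpleGraph V) [DecidableRel G.Adj] (a : V → ℕ)
    (hodd : Odd (Fintype.card V))
    (S : Finset V) (hbis : 2 * S.card = Fintype.card V + 1)
    (hmin : ∀ x ∈ S, ∀ y ∉ S, pot G a S ≤ pot G a (insert y (S.erase x)))
    (x y : V) (hx : x ∈ S) (hy : y ∉ S) :
    defc G S x + defc G S y + 2 * (if G.Adj x y then 1 else 0) ≥ (a x : ℤ) - (a y : ℤ) :=
  stmt4_general G a S hmin x y hx hy
end

section
/- Let S=(S,S̄) be a bisection, let u ∈ S̄ be a vertex of minimum rank with respect to S, let (A_u,B_u) be a u-pair for S and T the associated bisection. If y is an obstruction for T (i.e., def_T(y) < −a_y), then y ∈ S̄. -/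
/-!
The vertex `y` lies in `S` and in the larger side `T = S̄ ∖ B ∪ A` of the new bisection, so `y ∈ A`.
Moving `A` and `B` across flips the sign of the deficiency of `y` up to the edges from `y` into
`A ∪ B`: `def_T(y) = 2 W(y,A) − 2 W(y,B) − def_S(y)`. As `W(y,B) ≤ |B| = rank_S(u) − 1`, the
obstruction `def_T(y) < −a_y` forces `rank_S(y) < rank_S(u)`. Since an obstruction on the larger
side of a bisection is never stubborn, this contradicts the minimality of `rank_S(u)`.
-/

open Finset

section Neighbors

variable {V : Type*} [DecidableEq V] (G : SimpleGraph V) [DecidableRel G.Adj] (x : V)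

lemma nbrs_union {C D : Finset V} (h : Disjoint C D) :
    nbrs G x (C ∪ D) = nbrs G x C + nbrs G x D := by
  rw [nbrs, filter_union, card_union_of_disjoint (disjoint_filter_filter h)]
  rfl

lemma nbrs_sdiff_union {A B C : Finset V} (hBC : B ⊆ C) (hCA : Disjoint C A) :
    nbrs G x ((C \ B) ∪ A) + nbrs G x B = nbrs G x C + nbrs G x A := by
  have hC : nbrs G x C = nbrs G x (C \ B) + nbrs G x B := by
    rw [← nbrs_union G x sdiff_disjoint, sdiff_union_of_subset hBC]
  rw [nbrs_union G x (hCA.mono_left sdiff_subset), hC]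
  ring

lemma nbrs_add_nbrs_compl [Fintype V] (C : Finset V) :
    nbrs G x C + nbrs G x Cᶜ = G.degree x := by
  rw [← nbrs_union G x disjoint_compl_right, union_compl, nbrs,
    ← SimpleGraph.neighborFinset_eq_filter, SimpleGraph.card_neighborFinset_eq_degree]

end Neighbors

lemma card_sdiff_union {V : Type*} [DecidableEq V] {A B C : Finset V} (hBC : B ⊆ C)
    (hCA : Disjoint C A) : ((C \ B) ∪ A).card + B.card = C.card + A.card := by
  rw [card_union_of_disjoint (hCA.mono_left sdiff_subset), add_right_comm,
    card_sdiff_add_card_eq_card hBC]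

lemma compl_sdiff_union_of_subset {V : Type*} [Fintype V] [DecidableEq V] {S A B : Finset V}
    (hA : A ⊆ S) (hB : B ⊆ Sᶜ) : ((Sᶜ \ B) ∪ A)ᶜ = (S \ A) ∪ B := by
  ext x
  have := @hA x
  have := @hB x
  simp only [mem_compl, mem_union, mem_sdiff] at *
  tauto

section Bisection

variable {V : Type*} [Fintype V] [DecidableEq V] (G : SimpleGraph V) [DecidableRel G.Adj]
  (a : V → ℕ)

lemma not_stubborn_of_defc_lt {T : Finset V} (hT : 2 * T.card = Fintype.card V + 1) {y : V}
    (hyT : y ∈ T) (hobs : defc G T y < -(a y : ℤ)) : ¬ Stubborn G a y := by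
  rw [defc, if_pos hyT] at hobs
  have hdeg := nbrs_add_nbrs_compl G y T
  have hcard := card_add_card_compl T
  have hle : nbrs G y Tᶜ ≤ Tᶜ.card := card_filter_le _ _
  rw [Stubborn, not_le, lt_min_iff]
  omega

lemma rk_le_of_sub_defc_le {S : Finset V} {y : V} {k : ℤ}
    (h : (a y : ℤ) + 1 - defc G S y ≤ 2 * k) : rk G a S y ≤ k := by
  rw [rk, Int.ceil_le, div_le_iff₀ two_pos]
  exact_mod_cast h.trans_eq (mul_comm 2 k)

lemma defc_sdiff_union {S A B : Finset V} (hA : A ⊆ S) (hB : B ⊆ Sᶜ) {y : V} (hyA : y ∈ A) :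
    defc G ((Sᶜ \ B) ∪ A) y = 2 * nbrs G y A - 2 * nbrs G y B - defc G S y := by
  have hAB : Disjoint S B := disjoint_left.2 fun _ hx hxB => mem_compl.1 (hB hxB) hx
  have hT := nbrs_sdiff_union G y hB (disjoint_compl_left.mono_right hA)
  have hTc := nbrs_sdiff_union G y hA hAB
  rw [defc, defc, if_pos (mem_union_right _ hyA), if_pos (hA hyA),
    compl_sdiff_union_of_subset hA hB]
  omega

end Bisection

theorem stmt9_general {V : Type*} [Fintype V] [DecidableEq V]
    (G : SimpleGraph V) [DecidableRel G.Adj] (a : V → ℕ)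
    (S : Finset V) (hbis : 2 * S.card = Fintype.card V + 1)
    (u : V) (hu : u ∉ S)
    (hminrank : ∀ v : V, ¬ Stubborn G a v → rk G a S u ≤ rk G a S v)
    (A B : Finset V) (hpair : IsUPair G a S u A B)
    (y : V) (hyT : y ∈ assoc S u A B)
    (hobs : defc G (assoc S u A B) y < -(a y : ℤ)) :
    y ∉ S := by
  intro hyS
  rw [IsUPair, if_neg hu] at hpair
  obtain ⟨hAS, -, hBS, -, -, hcA, hcB⟩ := hpair
  rw [assoc, if_neg hu] at hyT hobs
  have hyA : y ∈ A := (mem_union.1 hyT).resolve_left fun h => mem_compl.1 (mem_sdiff.1 h).1 hyS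
  have hT : 2 * ((Sᶜ \ B) ∪ A).card = Fintype.card V + 1 := by
    have := card_sdiff_union hBS (disjoint_compl_left.mono_right hAS)
    have := card_add_card_compl S
    omega
  have hnsy := not_stubborn_of_defc_lt G a hT hyT hobs
  have hdef := defc_sdiff_union G hAS hBS hyA
  have hnB : nbrs G y B ≤ B.card := card_filter_le _ _
  have hrk : rk G a S y ≤ rk G a S u - 1 := rk_le_of_sub_defc_le G a (by omega)
  linarith [hminrank y hnsy]

/-- Lemma 6, first part: Let `u ∈ S̄` be a non-stubborn vertex of
minimum rank for the bisection `S`, `(A_u, B_u)` a `u`-pair for `S` and `T` the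
associated bisection. If `y` is an obstruction for `T` (a vertex of the larger
side of `T` with `def_T(y) < −a_y`), then `y ∈ S̄`. -/
theorem stmt9 {V : Type*} [Fintype V] [DecidableEq V]
    (G : SimpleGraph V) [DecidableRel G.Adj] (a : V → ℕ)
    (hodd : Odd (Fintype.card V))
    (S : Finset V) (hbis : 2 * S.card = Fintype.card V + 1)
    (u : V) (hu : u ∉ S) (hns : ¬ Stubborn G a u)
    (hminrank : ∀ v : V, ¬ Stubborn G a v → rk G a S u ≤ rk G a S v)
    (A B : Finset V) (hpair : IsUPair G a S u A B)
    (y : V) (hyT : y ∈ assoc S u A B)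
    (hobs : defc G (assoc S u A B) y < -(a y : ℤ)) :
    y ∉ S :=
  stmt9_general G a S hbis u hu hminrank A B hpair y hyT hobs
end

section
/- Let S be a bisection with no vertex of minimum rank in S̄, let u ∈ S be of minimum rank ℓ, and let T be the bisection associated with a u-pair (A_u,B_u). Suppose y is an obstruction for T with def_S(y) < 0 and rank_S(y) > ℓ. Let S' = (S̄∪{y}, S∖{y}). Then rank_{S'}(y) ≤ ℓ. -/
open Finset

/-! Since `y` lies in `T = S ∖ A_u ∪ B_u`, its deficiency there is
`def_T(y) = (W(y,S) − W(y,S̄)) − 2W(y,A_u) + 2W(y,B_u)`, and `W(y,A_u) ≤ |A_u| = ℓ`.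
So the obstruction inequality `def_T(y) < −a_y` gives `a_y + 1 + W(y,S) − W(y,S̄) ≤ 2ℓ`,
which is `rank_{S'}(y) ≤ ℓ` because `y ∈ S'` and `def_{S'}(y) = W(y,S̄) − W(y,S)`. -/

lemma Finset.compl_sdiff_union {V : Type*} [Fintype V] [DecidableEq V] {S A B : Finset V}
    (hA : A ⊆ S) (hB : B ⊆ Sᶜ) : (S \ A ∪ B)ᶜ = Sᶜ \ B ∪ A := by
  ext v
  have hvA := @hA v
  have hvB := @hB v
  simp only [mem_compl, mem_union, mem_sdiff] at hvB ⊢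
  tauto

section Neighbours

variable {V : Type*} [DecidableEq V] (G : SimpleGraph V) [DecidableRel G.Adj]

lemma nbrs_le_card (x : V) (A : Finset V) : nbrs G x A ≤ A.card :=
  card_filter_le _ _

lemma nbrs_union_of_disjoint (x : V) {A B : Finset V} (h : Disjoint A B) :
    nbrs G x (A ∪ B) = nbrs G x A + nbrs G x B := by
  rw [nbrs, filter_union, card_union_of_disjoint (disjoint_filter_filter h)]
  rfl

lemma nbrs_sdiff_union_of_subset (x : V) {S A B : Finset V} (hA : A ⊆ S)
    (hB : Disjoint S B) :
    (nbrs G x (S \ A ∪ B) : ℤ) = nbrs G x S - nbrs G x A + nbrs G x B := by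
  have hsplit := nbrs_union_of_disjoint G x (sdiff_disjoint : Disjoint (S \ A) A)
  rw [sdiff_union_of_subset hA] at hsplit
  rw [nbrs_union_of_disjoint G x (disjoint_of_subset_left sdiff_subset hB)]
  omega

variable [Fintype V]

lemma nbrs_sub_nbrs_compl_sdiff_union (x : V) {S A B : Finset V} (hA : A ⊆ S)
    (hB : B ⊆ Sᶜ) :
    (nbrs G x (S \ A ∪ B) : ℤ) - nbrs G x (S \ A ∪ B)ᶜ =
      nbrs G x S - nbrs G x Sᶜ - 2 * nbrs G x A + 2 * nbrs G x B := by
  rw [compl_sdiff_union hA hB,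
    nbrs_sdiff_union_of_subset G x hA (subset_compl_iff_disjoint_left.mp hB),
    nbrs_sdiff_union_of_subset G x hB (disjoint_compl_left.mono_right hA)]
  ring

lemma defc_insert_compl_self (S : Finset V) (y : V) :
    defc G (insert y Sᶜ) y = nbrs G y Sᶜ - nbrs G y S := by
  have hinsert : nbrs G y (insert y Sᶜ) = nbrs G y Sᶜ := by
    rw [nbrs, filter_insert, if_neg G.irrefl]
    rfl
  have herase : nbrs G y (S.erase y) = nbrs G y S := by
    rw [nbrs, filter_erase, erase_eq_of_notMem fun h => G.irrefl (mem_filter.mp h).2]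
    rfl
  rw [defc, if_pos (mem_insert_self y _), hinsert, compl_insert, compl_compl, herase]

lemma rk_le_iff (a : V → ℕ) (S : Finset V) (y : V) (m : ℤ) :
    rk G a S y ≤ m ↔ (a y : ℤ) + 1 - defc G S y ≤ 2 * m := by
  rw [rk, Int.ceil_le, div_le_iff₀ two_pos, mul_comm, ← Int.cast_le (R := ℚ)]
  push_cast
  rfl

end Neighbours

theorem stmt12_general {V : Type*} [Fintype V] [DecidableEq V]
    (G : SimpleGraph V) [DecidableRel G.Adj] (a : V → ℕ)
    (S : Finset V)
    (u : V) (hu : u ∈ S)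
    (ℓ : ℤ) (hℓ : ℓ = rk G a S u)
    (A B : Finset V) (hpair : IsUPair G a S u A B)
    (y : V) (hyT : y ∈ assoc S u A B)
    (hobs : defc G (assoc S u A B) y < -(a y : ℤ)) :
    rk G a (insert y Sᶜ) y ≤ ℓ := by
  rw [IsUPair, if_pos hu] at hpair
  obtain ⟨hAS, -, -, hBS, -, hcardA, -⟩ := hpair
  rw [assoc, if_pos hu] at hyT hobs
  rw [defc, if_pos hyT, nbrs_sub_nbrs_compl_sdiff_union G y hAS hBS] at hobs
  have hAℓ : (nbrs G y A : ℤ) ≤ ℓ := hℓ ▸ hcardA ▸ Int.ofNat_le.mpr (nbrs_le_card G y A)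
  rw [rk_le_iff, defc_insert_compl_self]
  omega

/-- Lemma 8: Let `S` be a bisection with no non-stubborn vertex of
minimum rank in `S̄`, let `u ∈ S` be non-stubborn of minimum rank `ℓ`, and let `T`
be the bisection associated with a `u`-pair `(A_u, B_u)`. Suppose `y` is an
obstruction for `T` with `def_S(y) < 0` and `rank_S(y) > ℓ`. Then, for
`S' = (S̄ ∪ {y}, S ∖ {y})`, it holds `rank_{S'}(y) ≤ ℓ`. -/
theorem stmt12 {V : Type*} [Fintype V] [DecidableEq V]
    (G : SimpleGraph V) [DecidableRel G.Adj] (a : V → ℕ)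
    (hodd : Odd (Fintype.card V))
    (S : Finset V) (hbis : 2 * S.card = Fintype.card V + 1)
    (u : V) (hu : u ∈ S) (hns : ¬ Stubborn G a u)
    (ℓ : ℤ) (hℓ : ℓ = rk G a S u)
    (hminrank : ∀ v : V, ¬ Stubborn G a v → ℓ ≤ rk G a S v)
    (hnotbar : ∀ v : V, v ∉ S → ¬ Stubborn G a v → ℓ < rk G a S v)
    (A B : Finset V) (hpair : IsUPair G a S u A B)
    (y : V) (hyT : y ∈ assoc S u A B)
    (hobs : defc G (assoc S u A B) y < -(a y : ℤ))
    (hnegdef : defc G S y < 0) (hrky : ℓ < rk G a S y) :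
    rk G a (insert y Sᶜ) y ≤ ℓ :=
  stmt12_general G a S u hu ℓ hℓ A B hpair y hyT hobs
end

section
/- Let G be a graph with an odd number of vertices in which at least one vertex is non-stubborn. Then G admits a good bisection, i.e., a bisection S=(S,S̄) such that def_S(x) ≥ −a_x for every x ∈ S and there exists u ∈ S with def_S(u) ≥ a_u + 1. Consequently, G admits a subvertable belief assignment with a swing vertex. -/
/-!
Among the bisections `S` (with `|S| = (n+1)/2`) containing a vertex `u` with
`def_S(u) ≥ a_u + 1`, take one with the fewest cut edges. The family is nonempty: a
non-stubborn vertex `v` placed together with `min(d(v), (n-1)/2)` of its neighbours has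
deficiency `min(d(v), n-d(v)-1) > a_v`. If some `x ∈ S` had `def_S(x) < -a_x ≤ 0`, the
bisection `S̄ ∪ {x}` would again be in the family (with witness `x`, whose deficiency changes
sign) and would cut `-def_S(x)` fewer edges.

For the game, give belief 1 exactly to `S ∖ {u}`. After `u` switches, the opinions are the
indicator of `S`; the move paid off because `def_S(u) > α_u/(1-α_u)`, and no `x ∈ S ∖ {u}`
gains by switching back because `-def_S(x) ≤ a_x ≤ α_x/(1-α_x)`.
-/

open Finset

lemma lt_one_sub_mul_of_floor_div_lt {α : ℝ} (hα : α < 1) {m : ℤ}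
    (h : ⌊α / (1 - α)⌋ < m) : α < (1 - α) * m := by
  rw [Int.floor_lt, div_lt_iff₀ (by linarith)] at h
  linarith

lemma one_sub_mul_le_of_le_floor_div {α : ℝ} (hα : α < 1) {m : ℤ}
    (h : m ≤ ⌊α / (1 - α)⌋) : (1 - α) * m ≤ α := by
  rw [Int.le_floor, le_div_iff₀ (by linarith)] at h
  linarith

section Opinion

variable {V : Type*} [DecidableEq V]

def opinionVec (S : Finset V) : V → ℝ := fun x => if x ∈ S then 1 else 0

@[simp]
lemma opinionVec_eq_zero_iff {S : Finset V} {x : V} : opinionVec S x = 0 ↔ x ∉ S := by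
  by_cases hx : x ∈ S <;> simp [opinionVec, hx]

@[simp]
lemma opinionVec_eq_one_iff {S : Finset V} {x : V} : opinionVec S x = 1 ↔ x ∈ S := by
  by_cases hx : x ∈ S <;> simp [opinionVec, hx]

lemma update_opinionVec_one (S : Finset V) (y : V) :
    Function.update (opinionVec S) y 1 = opinionVec (insert y S) := by
  ext x
  by_cases hx : x = y <;> simp [opinionVec, Function.update, hx]

lemma update_opinionVec_zero (S : Finset V) (y : V) :
    Function.update (opinionVec S) y 0 = opinionVec (S.erase y) := by
  ext x
  by_cases hx : x = y <;> simp [opinionVec, Function.update, hx]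

end Opinion

namespace SimpleGraph

variable {V : Type*} [DecidableEq V] (G : SimpleGraph V) [DecidableRel G.Adj]

lemma nbrs_eq_sum_ite (x : V) (A : Finset V) :
    nbrs G x A = ∑ y ∈ A, if G.Adj x y then (1 : ℕ) else 0 := by
  rw [nbrs, card_filter]

lemma sum_nbrs_comm (A B : Finset V) :
    ∑ x ∈ A, nbrs G x B = ∑ y ∈ B, nbrs G y A := by
  simp only [nbrs_eq_sum_ite]
  rw [sum_comm]
  simp only [G.adj_comm]

lemma nbrs_erase_self (x : V) (A : Finset V) : nbrs G x (A.erase x) = nbrs G x A := by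
  rw [nbrs, filter_erase, erase_eq_of_notMem fun h => G.irrefl (mem_filter.1 h).2, nbrs]

lemma nbrs_insert_self (x : V) (A : Finset V) : nbrs G x (insert x A) = nbrs G x A := by
  rw [nbrs, filter_insert, if_neg (G.irrefl), nbrs]

lemma nbrs_erase_add (x y : V) {A : Finset V} (hy : y ∈ A) :
    nbrs G x (A.erase y) + (if G.Adj x y then 1 else 0) = nbrs G x A := by
  rw [nbrs, filter_erase, nbrs]
  split_ifs with hxy
  · exact card_erase_add_one (mem_filter.2 ⟨hy, hxy⟩)
  · rw [erase_eq_of_notMem fun h => hxy (mem_filter.1 h).2, add_zero]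

lemma nbrs_add_nbrs_compl [Fintype V] (x : V) (A : Finset V) :
    nbrs G x A + nbrs G x Aᶜ = G.degree x := by
  rw [nbrs, nbrs, ← card_union_of_disjoint (disjoint_filter_filter disjoint_compl_right),
    ← filter_union, union_compl, ← card_neighborFinset_eq_degree, neighborFinset_eq_filter]

lemma sum_neighborFinset_ite_mem [Fintype V] {R : Type*} [AddCommMonoidWithOne R]
    (x : V) (A : Finset V) :
    ∑ y ∈ G.neighborFinset x, (if y ∈ A then 1 else 0 : R) = nbrs G x A := by
  rw [sum_boole, nbrs]
  congr 2
  ext y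
  simp [and_comm]

section Bisection

variable [Fintype V]

def cutSize (S : Finset V) : ℕ := ∑ x ∈ S, nbrs G x Sᶜ

lemma defc_of_mem {S : Finset V} {x : V} (hx : x ∈ S) :
    defc G S x = nbrs G x S - nbrs G x Sᶜ := if_pos hx

lemma card_insert_compl {S : Finset V} {x : V} (hx : x ∈ S) :
    (insert x Sᶜ).card + S.card = Fintype.card V + 1 := by
  rw [card_insert_of_notMem (by simpa using hx), card_compl]
  have := S.card_le_univ
  omega

lemma defc_insert_compl {S : Finset V} {x : V} (hx : x ∈ S) :
    defc G (insert x Sᶜ) x = -defc G S x := by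
  rw [defc_of_mem G (mem_insert_self x Sᶜ), compl_insert, compl_compl, defc_of_mem G hx,
    nbrs_erase_self, nbrs_insert_self]
  ring

lemma cutSize_insert_compl_add {S : Finset V} {x : V} (hx : x ∈ S) :
    G.cutSize (insert x Sᶜ) + nbrs G x Sᶜ = nbrs G x S + G.cutSize S := by
  have hback : ∑ y ∈ Sᶜ, (if G.Adj y x then 1 else 0) = nbrs G x Sᶜ := by
    simp only [nbrs_eq_sum_ite, G.adj_comm]
  rw [cutSize, compl_insert, compl_compl, sum_insert (by simpa using hx), nbrs_erase_self,
    add_assoc, ← hback, ← sum_add_distrib]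
  simp only [nbrs_erase_add G _ _ hx]
  rw [sum_nbrs_comm, cutSize]

lemma cutSize_insert_compl_lt {S : Finset V} {x : V} (hx : x ∈ S) (h : defc G S x < 0) :
    G.cutSize (insert x Sᶜ) < G.cutSize S := by
  have := G.cutSize_insert_compl_add hx
  rw [defc_of_mem G hx] at h
  omega

lemma exists_bisection_min_le_defc {k : ℕ} (hcard : Fintype.card V = 2 * k + 1) (v : V) :
    ∃ S : Finset V, S.card = k + 1 ∧ v ∈ S ∧
      min (G.degree v : ℤ) (Fintype.card V - G.degree v - 1) ≤ defc G S v := by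
  obtain ⟨N, hNv, hNcard⟩ := exists_subset_card_eq (s := G.neighborFinset v)
    ((min_le_left (G.degree v) k).trans_eq (G.card_neighborFinset_eq_degree v).symm)
  have hvN : v ∉ N := fun h => G.irrefl ((G.mem_neighborFinset v v).1 (hNv h))
  obtain ⟨S, hNS, hScard⟩ := exists_superset_card_eq (s := insert v N) (n := k + 1)
    (by rw [card_insert_of_notMem hvN, hNcard]; omega) (by omega)
  have hvS : v ∈ S := hNS (mem_insert_self v N)
  have hN_le : min (G.degree v) k ≤ nbrs G v S :=
    hNcard ▸ card_le_card fun y hy =>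
      mem_filter.2 ⟨hNS (mem_insert_of_mem hy), (G.mem_neighborFinset v y).1 (hNv hy)⟩
  have hdeg := G.nbrs_add_nbrs_compl v S
  refine ⟨S, hScard, hvS, ?_⟩
  rw [defc_of_mem G hvS, hcard]
  omega

theorem exists_good_bisection {k : ℕ} (hcard : Fintype.card V = 2 * k + 1)
    (a : V → ℤ) (ha : ∀ x, 0 ≤ a x)
    (hns : ∃ v, a v < min (G.degree v : ℤ) (Fintype.card V - G.degree v - 1)) :
    ∃ S : Finset V, S.card = k + 1 ∧
      (∀ x ∈ S, -a x ≤ defc G S x) ∧ ∃ u ∈ S, a u + 1 ≤ defc G S u := by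
  obtain ⟨v, hv⟩ := hns
  obtain ⟨S₀, hS₀card, hvS₀, hS₀v⟩ := G.exists_bisection_min_le_defc hcard v
  let B := univ.filter fun S : Finset V => S.card = k + 1 ∧ ∃ u ∈ S, a u + 1 ≤ defc G S u
  obtain ⟨S, hSB, hSmin⟩ := B.exists_min_image G.cutSize
    ⟨S₀, mem_filter.2 ⟨mem_univ _, hS₀card, v, hvS₀, by omega⟩⟩
  obtain ⟨-, hScard, hwit⟩ := mem_filter.1 hSB
  refine ⟨S, hScard, fun x hx => ?_, hwit⟩
  by_contra! hxdef
  have hflipB : insert x Sᶜ ∈ B := by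
    refine mem_filter.2 ⟨mem_univ _, ?_, x, mem_insert_self x Sᶜ, ?_⟩
    · have := card_insert_compl hx
      omega
    · rw [defc_insert_compl G hx]
      omega
  have := ha x
  exact (G.cutSize_insert_compl_lt hx (by omega)).not_ge (hSmin _ hflipB)

end Bisection

section Game

variable [Fintype V]

def prefCost (α : V → ℝ) (b s : V → ℝ) (i : V) : ℝ :=
  α i * |s i - b i| + (1 - α i) * ∑ j ∈ G.neighborFinset i, |s i - s j|

lemma sum_abs_sub_opinionVec_of_mem {S : Finset V} {i : V} (hi : i ∈ S) :
    ∑ j ∈ G.neighborFinset i, |opinionVec S i - opinionVec S j| = nbrs G i Sᶜ := by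
  rw [← G.sum_neighborFinset_ite_mem]
  refine sum_congr rfl fun j _ => ?_
  by_cases hj : j ∈ S <;> simp [opinionVec, hi, hj]

lemma sum_abs_sub_opinionVec_of_notMem {S : Finset V} {i : V} (hi : i ∉ S) :
    ∑ j ∈ G.neighborFinset i, |opinionVec S i - opinionVec S j| = nbrs G i S := by
  rw [← G.sum_neighborFinset_ite_mem]
  refine sum_congr rfl fun j _ => ?_
  by_cases hj : j ∈ S <;> simp [opinionVec, hi, hj]

theorem prefCost_swing_lt (α : V → ℝ) {S : Finset V} {u : V} (hu : u ∈ S) (hα : α u < 1)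
    (hdef : ⌊α u / (1 - α u)⌋ < defc G S u) :
    G.prefCost α (opinionVec (S.erase u)) (opinionVec S) u <
      G.prefCost α (opinionVec (S.erase u)) (opinionVec (S.erase u)) u := by
  have hu' : u ∉ S.erase u := notMem_erase u S
  have key := lt_one_sub_mul_of_floor_div_lt hα hdef
  rw [defc_of_mem G hu] at key
  simp only [prefCost, G.sum_abs_sub_opinionVec_of_mem hu,
    G.sum_abs_sub_opinionVec_of_notMem hu', nbrs_erase_self]
  simp only [opinionVec, hu, hu', if_true, if_false]
  push_cast at key
  norm_num
  linarith

theorem prefCost_le_erase (α : V → ℝ) {B S : Finset V} {x : V} (hxB : x ∈ B) (hxS : x ∈ S)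
    (hα : α x < 1) (hdef : -defc G S x ≤ ⌊α x / (1 - α x)⌋) :
    G.prefCost α (opinionVec B) (opinionVec S) x ≤
      G.prefCost α (opinionVec B) (opinionVec (S.erase x)) x := by
  have hx' : x ∉ S.erase x := notMem_erase x S
  have key := one_sub_mul_le_of_le_floor_div hα hdef
  rw [defc_of_mem G hxS] at key
  simp only [prefCost, G.sum_abs_sub_opinionVec_of_mem hxS,
    G.sum_abs_sub_opinionVec_of_notMem hx', nbrs_erase_self]
  simp only [opinionVec, hxB, hxS, hx', if_true, if_false]
  push_cast at key
  norm_num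
  linarith

end Game

end SimpleGraph

/-- Main Theorem: If `G` has an odd number of vertices and at least
one non-stubborn vertex, then `G` admits a good bisection (a bisection `S` with
`def_S(x) ≥ −a_x` for every `x ∈ S` and some `u ∈ S` with `def_S(u) ≥ a_u + 1`).
Consequently, `G` admits a subvertable belief assignment with a swing vertex:
a belief assignment `b` with a majority of `(n+1)/2` zeros and a vertex `u` with
`b u = 0` whose best response in the truthful state is opinion 1, after which no
vertex with belief 1 has an incentive to switch to opinion 0. -/
theorem stmt18 {V : Type*} [Fintype V] [DecidableEq V]
    (G : SimpleGraph V) [DecidableRel G.Adj]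
    (hodd : Odd (Fintype.card V))
    (α : V → ℝ) (hα : ∀ v, 0 < α v ∧ α v < 1)
    (a : V → ℤ) (ha : ∀ v, a v = ⌊α v / (1 - α v)⌋)
    (hns : ∃ v : V, a v <
      min (G.degree v : ℤ) ((Fintype.card V : ℤ) - (G.degree v : ℤ) - 1))
    (cost : (V → ℝ) → (V → ℝ) → V → ℝ)
    (hcost : ∀ b s i, cost b s i =
      α i * |s i - b i| + (1 - α i) * ∑ j ∈ G.neighborFinset i, |s i - s j|) :
    (∃ S : Finset V, 2 * S.card = Fintype.card V + 1 ∧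
      (∀ x ∈ S, -(a x) ≤ defc G S x) ∧ ∃ u ∈ S, a u + 1 ≤ defc G S u) ∧
    (∃ (b : V → ℝ) (u : V),
      (∀ j, b j = 0 ∨ b j = 1) ∧ b u = 0 ∧
      2 * ((univ : Finset V).filter (fun x => b x = 0)).card = Fintype.card V + 1 ∧
      cost b (Function.update b u 1) u < cost b b u ∧
      ∀ x, b x = 1 →
        cost b (Function.update b u 1) x ≤
          cost b (Function.update (Function.update b u 1) x 0) x) := by
  obtain ⟨k, hk⟩ := hodd
  have ha0 : ∀ x, 0 ≤ a x := fun x => (ha x) ▸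
    Int.floor_nonneg.2 (div_nonneg (hα x).1.le (sub_nonneg.2 (hα x).2.le))
  obtain ⟨S, hScard, hgood, u, huS, hu⟩ := G.exists_good_bisection hk a ha0 hns
  obtain rfl : cost = G.prefCost α := by
    funext b s i
    exact hcost b s i
  refine ⟨⟨S, by omega, hgood, u, huS, hu⟩, opinionVec (S.erase u), u,
    fun j => ?_, by simp, ?_, ?_, fun x hx => ?_⟩
  · by_cases hj : j ∈ S.erase u <;> simp [hj]
  · have hzeros : univ.filter (fun x => opinionVec (S.erase u) x = 0) = (S.erase u)ᶜ := by
      ext x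
      simp only [mem_filter, mem_univ, true_and, opinionVec_eq_zero_iff, mem_compl]
    rw [hzeros, card_compl, card_erase_of_mem huS, hScard]
    omega
  · rw [update_opinionVec_one, insert_erase huS]
    exact G.prefCost_swing_lt α huS (hα u).2 (by rw [← ha]; omega)
  · rw [opinionVec_eq_one_iff] at hx
    rw [update_opinionVec_one, insert_erase huS, update_opinionVec_zero]
    have := hgood x (mem_of_mem_erase hx)
    exact G.prefCost_le_erase α hx (mem_of_mem_erase hx) (hα x).2 (by rw [← ha]; omega)
end
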